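/- Let Ω ⊂ ℂ be a simply connected domain, let F, G : Ω → ℂ be holomorphic with F and G nonvanishing on Ω, and fix z₀ ∈ Ω. Define X_min(z) = Re ∫_{z₀}^z ((1 − G²)F, −i(1 + G²)F, 2GF) dw, X₁(z) = Re ∫_{z₀}^z (F, −iF, GF) dw, and X₂(z) = Re ∫_{z₀}^z (FG², −iFG², FG) dw. Then X_min = X₁ + A X₂ on Ω, where A = diag(−1,1,1), and both X₁ and X₂ are harmonic immersions of Ω into ℝ³ (all their coordinate functions are harmonic and their differentials have rank 2 everywhere). -/

import Mathlib

/-!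
The primitives are holomorphic on `Ω`. Since `(1 - G²)F = F - FG²`, `-i(1 + G²)F = -iF - iFG²`
and `2GF = GF + FG`, the primitives of `X_min` and of `X₁ ± X₂` have equal derivatives and agree
at `z₀`, so they agree on the connected set `Ω`. Real parts of holomorphic functions are harmonic:
the second derivatives of `Re f` in the directions `1` and `i` are `Re f''` and `Re (i² f'')`.
If the first two components have derivatives `c` and `-ic`, the differential sends `v` to
`(Re (cv), Im (cv), …)`, which is injective as soon as `c ≠ 0`.
-/

/-- Partial derivative of a real-valued function on `ℂ ≅ ℝ²` in direction `v`. -/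
noncomputable def pd (v : ℂ) (f : ℂ → ℝ) (z : ℂ) : ℝ := fderiv ℝ f z v

/-- A real-valued function is harmonic on `Ω` if it is `C²` there and satisfies
Laplace's equation `h_xx + h_yy = 0` (derivatives in directions `1` and `I`). -/
def HarmonicOnSet (f : ℂ → ℝ) (Ω : Set ℂ) : Prop :=
  ContDiffOn ℝ 2 f Ω ∧
    ∀ z ∈ Ω, pd 1 (pd 1 f) z + pd Complex.I (pd Complex.I f) z = 0

/-- The diagonal linear map `A = diag(-1,1,1)` on `ℝ³ ≅ ℝ × ℝ × ℝ`. -/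
def AdiagR : ℝ × ℝ × ℝ → ℝ × ℝ × ℝ := fun v => (-v.1, v.2.1, v.2.2)

open Topology

theorem IsOpen.eqOn_of_hasDerivAt {𝕜 E : Type*} [RCLike 𝕜] [NormedAddCommGroup E]
    [NormedSpace 𝕜 E] {s : Set 𝕜} {f g f' : 𝕜 → E} {x : 𝕜} (hs : IsOpen s)
    (hs' : IsPreconnected s) (hf : ∀ y ∈ s, HasDerivAt f (f' y) y)
    (hg : ∀ y ∈ s, HasDerivAt g (f' y) y) (hx : x ∈ s) (hfgx : f x = g x) : s.EqOn f g :=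
  hs.eqOn_of_deriv_eq hs' (fun y hy => (hf y hy).differentiableAt.differentiableWithinAt)
    (fun y hy => (hg y hy).differentiableAt.differentiableWithinAt)
    (fun y hy => (hf y hy).deriv.trans (hg y hy).deriv.symm) hx hfgx

theorem HasDerivAt.hasFDerivAt_re {f : ℂ → ℂ} {c z : ℂ} (h : HasDerivAt f c z) :
    HasFDerivAt (fun w => (f w).re) (Complex.reCLM.comp (c • (1 : ℂ →L[ℝ] ℂ))) z :=
  Complex.reCLM.hasFDerivAt.comp z h.complexToReal_fderiv

theorem pd_re_of_hasDerivAt {f : ℂ → ℂ} {c z : ℂ} (h : HasDerivAt f c z) (v : ℂ) :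
    pd v (fun w => (f w).re) z = (c * v).re := by
  simp [pd, h.hasFDerivAt_re.fderiv]

theorem harmonicOnSet_re {Ω : Set ℂ} (hΩ : IsOpen Ω) {f : ℂ → ℂ}
    (hf : DifferentiableOn ℂ f Ω) : HarmonicOnSet (fun z => (f z).re) Ω := by
  refine ⟨Complex.reCLM.contDiff.comp_contDiffOn ((hf.contDiffOn hΩ).restrict_scalars ℝ),
    fun z hz => ?_⟩
  have pd_pd : ∀ v, pd v (pd v fun w => (f w).re) z = (deriv (deriv f) z * v * v).re := by
    intro v
    have hpd : pd v (fun w => (f w).re) =ᶠ[𝓝 z] fun w => (deriv f w * v).re := by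
      filter_upwards [hΩ.mem_nhds hz] with w hw
      exact pd_re_of_hasDerivAt (hf.hasDerivAt (hΩ.mem_nhds hw)) v
    rw [pd, hpd.fderiv_eq, ← pd,
      pd_re_of_hasDerivAt (((hf.deriv hΩ).hasDerivAt (hΩ.mem_nhds hz)).mul_const v)]
  simp [pd_pd, mul_assoc]

theorem injective_fderiv_re_prod {f₁ f₂ f₃ : ℂ → ℂ} {c c₃ z : ℂ}
    (h₁ : HasDerivAt f₁ c z) (h₂ : HasDerivAt f₂ (-Complex.I * c) z)
    (h₃ : HasDerivAt f₃ c₃ z) (hc : c ≠ 0) :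
    Function.Injective
      (fderiv ℝ (fun w => (((f₁ w).re, (f₂ w).re, (f₃ w).re) : ℝ × ℝ × ℝ)) z) := by
  rw [(h₁.hasFDerivAt_re.prodMk (h₂.hasFDerivAt_re.prodMk h₃.hasFDerivAt_re)).fderiv,
    injective_iff_map_eq_zero]
  intro v hv
  have hre : (c * v).re = 0 := by simpa using congrArg Prod.fst hv
  have him : (c * v).im = 0 := by simpa [mul_assoc] using congrArg (·.2.1) hv
  exact (mul_eq_zero.mp (Complex.ext hre him)).resolve_left hc

theorem minimal_surface_superposition_general
    (Ω : Set ℂ) (hΩopen : IsOpen Ω) (hSC : SimplyConnectedSpace Ω)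
    (F G : ℂ → ℂ)
    (hFne : ∀ z ∈ Ω, F z ≠ 0) (hGne : ∀ z ∈ Ω, G z ≠ 0)
    (z₀ : ℂ) (hz₀ : z₀ ∈ Ω)
    (M₁ M₂ M₃ A₁ A₂ A₃ B₁ B₂ B₃ : ℂ → ℂ)
    (hM₁ : ∀ z ∈ Ω, HasDerivAt M₁ ((1 - G z ^ 2) * F z) z)
    (hM₂ : ∀ z ∈ Ω, HasDerivAt M₂ (-Complex.I * (1 + G z ^ 2) * F z) z)
    (hM₃ : ∀ z ∈ Ω, HasDerivAt M₃ (2 * G z * F z) z)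
    (hA₁ : ∀ z ∈ Ω, HasDerivAt A₁ (F z) z)
    (hA₂ : ∀ z ∈ Ω, HasDerivAt A₂ (-Complex.I * F z) z)
    (hA₃ : ∀ z ∈ Ω, HasDerivAt A₃ (G z * F z) z)
    (hB₁ : ∀ z ∈ Ω, HasDerivAt B₁ (F z * G z ^ 2) z)
    (hB₂ : ∀ z ∈ Ω, HasDerivAt B₂ (-Complex.I * F z * G z ^ 2) z)
    (hB₃ : ∀ z ∈ Ω, HasDerivAt B₃ (F z * G z) z)
    (hM₁0 : M₁ z₀ = 0) (hM₂0 : M₂ z₀ = 0) (hM₃0 : M₃ z₀ = 0)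
    (hA₁0 : A₁ z₀ = 0) (hA₂0 : A₂ z₀ = 0) (hA₃0 : A₃ z₀ = 0)
    (hB₁0 : B₁ z₀ = 0) (hB₂0 : B₂ z₀ = 0) (hB₃0 : B₃ z₀ = 0) :
    (∀ z ∈ Ω,
      (((M₁ z).re, (M₂ z).re, (M₃ z).re) : ℝ × ℝ × ℝ)
        = (((A₁ z).re, (A₂ z).re, (A₃ z).re) : ℝ × ℝ × ℝ)
          + AdiagR ((B₁ z).re, (B₂ z).re, (B₃ z).re))
    ∧ HarmonicOnSet (fun z => (A₁ z).re) Ω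
    ∧ HarmonicOnSet (fun z => (A₂ z).re) Ω
    ∧ HarmonicOnSet (fun z => (A₃ z).re) Ω
    ∧ HarmonicOnSet (fun z => (B₁ z).re) Ω
    ∧ HarmonicOnSet (fun z => (B₂ z).re) Ω
    ∧ HarmonicOnSet (fun z => (B₃ z).re) Ω
    ∧ (∀ z ∈ Ω, Function.Injective
        (fderiv ℝ (fun w => (((A₁ w).re, (A₂ w).re, (A₃ w).re) : ℝ × ℝ × ℝ)) z))
    ∧ (∀ z ∈ Ω, Function.Injective
        (fderiv ℝ (fun w => (((B₁ w).re, (B₂ w).re, (B₃ w).re) : ℝ × ℝ × ℝ)) z)) := by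
  have hpre : IsPreconnected Ω := isPreconnected_iff_preconnectedSpace.mpr inferInstance
  have holo : ∀ {f f' : ℂ → ℂ}, (∀ z ∈ Ω, HasDerivAt f (f' z) z) → DifferentiableOn ℂ f Ω :=
    fun h z hz => (h z hz).differentiableAt.differentiableWithinAt
  have eq₁ : Ω.EqOn M₁ (A₁ - B₁) := hΩopen.eqOn_of_hasDerivAt hpre hM₁
    (fun z hz => ((hA₁ z hz).sub (hB₁ z hz)).congr_deriv (by ring)) hz₀
    (by simp [hM₁0, hA₁0, hB₁0])
  have eq₂ : Ω.EqOn M₂ (A₂ + B₂) := hΩopen.eqOn_of_hasDerivAt hpre hM₂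
    (fun z hz => ((hA₂ z hz).add (hB₂ z hz)).congr_deriv (by ring)) hz₀
    (by simp [hM₂0, hA₂0, hB₂0])
  have eq₃ : Ω.EqOn M₃ (A₃ + B₃) := hΩopen.eqOn_of_hasDerivAt hpre hM₃
    (fun z hz => ((hA₃ z hz).add (hB₃ z hz)).congr_deriv (by ring)) hz₀
    (by simp [hM₃0, hA₃0, hB₃0])
  refine ⟨fun z hz => ?_, harmonicOnSet_re hΩopen (holo hA₁), harmonicOnSet_re hΩopen (holo hA₂),
    harmonicOnSet_re hΩopen (holo hA₃), harmonicOnSet_re hΩopen (holo hB₁),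
    harmonicOnSet_re hΩopen (holo hB₂), harmonicOnSet_re hΩopen (holo hB₃),
    fun z hz => injective_fderiv_re_prod (hA₁ z hz) (hA₂ z hz) (hA₃ z hz) (hFne z hz),
    fun z hz => injective_fderiv_re_prod (hB₁ z hz) ((hB₂ z hz).congr_deriv (by ring))
      (hB₃ z hz) (mul_ne_zero (hFne z hz) (pow_ne_zero 2 (hGne z hz)))⟩
  simp [AdiagR, eq₁ hz, eq₂ hz, eq₃ hz, sub_eq_add_neg]

/-- A minimal surface decomposes as a superposition of two harmonic immersions:
`X_min = X₁ + A X₂`, where the `Mⱼ, Aⱼ, Bⱼ` are the primitives (vanishing at `z₀`)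
of the Weierstrass integrands of `X_min`, `X₁`, `X₂` respectively. -/
theorem minimal_surface_superposition
    (Ω : Set ℂ) (hΩopen : IsOpen Ω) (hSC : SimplyConnectedSpace Ω)
    (F G : ℂ → ℂ)
    (hF : DifferentiableOn ℂ F Ω) (hG : DifferentiableOn ℂ G Ω)
    (hFne : ∀ z ∈ Ω, F z ≠ 0) (hGne : ∀ z ∈ Ω, G z ≠ 0)
    (z₀ : ℂ) (hz₀ : z₀ ∈ Ω)
    (M₁ M₂ M₃ A₁ A₂ A₃ B₁ B₂ B₃ : ℂ → ℂ)
    (hM₁ : ∀ z ∈ Ω, HasDerivAt M₁ ((1 - G z ^ 2) * F z) z)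
    (hM₂ : ∀ z ∈ Ω, HasDerivAt M₂ (-Complex.I * (1 + G z ^ 2) * F z) z)
    (hM₃ : ∀ z ∈ Ω, HasDerivAt M₃ (2 * G z * F z) z)
    (hA₁ : ∀ z ∈ Ω, HasDerivAt A₁ (F z) z)
    (hA₂ : ∀ z ∈ Ω, HasDerivAt A₂ (-Complex.I * F z) z)
    (hA₃ : ∀ z ∈ Ω, HasDerivAt A₃ (G z * F z) z)
    (hB₁ : ∀ z ∈ Ω, HasDerivAt B₁ (F z * G z ^ 2) z)
    (hB₂ : ∀ z ∈ Ω, HasDerivAt B₂ (-Complex.I * F z * G z ^ 2) z)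
    (hB₃ : ∀ z ∈ Ω, HasDerivAt B₃ (F z * G z) z)
    (hM₁0 : M₁ z₀ = 0) (hM₂0 : M₂ z₀ = 0) (hM₃0 : M₃ z₀ = 0)
    (hA₁0 : A₁ z₀ = 0) (hA₂0 : A₂ z₀ = 0) (hA₃0 : A₃ z₀ = 0)
    (hB₁0 : B₁ z₀ = 0) (hB₂0 : B₂ z₀ = 0) (hB₃0 : B₃ z₀ = 0) :
    (∀ z ∈ Ω,
      (((M₁ z).re, (M₂ z).re, (M₃ z).re) : ℝ × ℝ × ℝ)
        = (((A₁ z).re, (A₂ z).re, (A₃ z).re) : ℝ × ℝ × ℝ)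
          + AdiagR ((B₁ z).re, (B₂ z).re, (B₃ z).re))
    ∧ HarmonicOnSet (fun z => (A₁ z).re) Ω
    ∧ HarmonicOnSet (fun z => (A₂ z).re) Ω
    ∧ HarmonicOnSet (fun z => (A₃ z).re) Ω
    ∧ HarmonicOnSet (fun z => (B₁ z).re) Ω
    ∧ HarmonicOnSet (fun z => (B₂ z).re) Ω
    ∧ HarmonicOnSet (fun z => (B₃ z).re) Ω
    ∧ (∀ z ∈ Ω, Function.Injective
        (fderiv ℝ (fun w => (((A₁ w).re, (A₂ w).re, (A₃ w).re) : ℝ × ℝ × ℝ)) z))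
    ∧ (∀ z ∈ Ω, Function.Injective
        (fderiv ℝ (fun w => (((B₁ w).re, (B₂ w).re, (B₃ w).re) : ℝ × ℝ × ℝ)) z)) :=
  minimal_surface_superposition_general Ω hΩopen hSC F G hFne hGne z₀ hz₀ M₁ M₂ M₃ A₁ A₂ A₃ B₁ B₂ B₃
    hM₁ hM₂ hM₃ hA₁ hA₂ hA₃ hB₁ hB₂ hB₃ hM₁0 hM₂0 hM₃0 hA₁0 hA₂0 hA₃0 hB₁0 hB₂0 hB₃0
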